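/- arXiv:1605.04206 — 2 statements merged into one kernel-verified Lean document; each statement's English description precedes it below -/
import Mathlib

section
/- Let B⁽⁺¹⁾_{ℓ,m} denote the number of Motzkin paths from 0 to +1 with exactly ℓ steps equal to 0 and m steps equal to −1, B_{ℓ,m} the number of Motzkin bridges with ℓ steps 0 and m steps −1, and E_{ℓ,m} the number of Motzkin excursions with ℓ steps 0 and m steps −1. Then for all nonnegative integers ℓ and m: B⁽⁺¹⁾_{ℓ,m} = Σ E_{ℓ₁,m₁}·B_{ℓ₂,m₂}, where the sum ranges over all ℓ₁ + ℓ₂ = ℓ and m₁ + m₂ = m. Equivalently, B⁽⁺¹⁾ = E·B as formal power series in t and u. -/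
/-- A Motzkin walk: a finite sequence of steps from `{+1, 0, −1}`. -/
def IsMotzkinWalk (w : List ℤ) : Prop := ∀ s ∈ w, s = 1 ∨ s = 0 ∨ s = -1

/-- `bridgeCount ℓ m` is the number of Motzkin bridges (walks with total sum `0`)
with exactly `ℓ` steps equal to `0` and `m` steps equal to `−1`. -/
noncomputable def bridgeCount (ℓ m : ℕ) : ℕ :=
  Nat.card {w : List ℤ // IsMotzkinWalk w ∧ w.sum = 0 ∧
    w.count 0 = ℓ ∧ w.count (-1) = m}

/-- `excursionCount ℓ m` is the number of Motzkin excursions (bridges all of whose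
partial sums are nonnegative) with exactly `ℓ` steps `0` and `m` steps `−1`. -/
noncomputable def excursionCount (ℓ m : ℕ) : ℕ :=
  Nat.card {w : List ℤ // IsMotzkinWalk w ∧ w.sum = 0 ∧
    (∀ p : List ℤ, p <+: w → 0 ≤ p.sum) ∧ w.count 0 = ℓ ∧ w.count (-1) = m}

/-- `pathPlusCount ℓ m` is the number of Motzkin paths from `0` to `+1` (walks with total
sum `+1`) with exactly `ℓ` steps `0` and `m` steps `−1`. -/
noncomputable def pathPlusCount (ℓ m : ℕ) : ℕ :=
  Nat.card {w : List ℤ // IsMotzkinWalk w ∧ w.sum = 1 ∧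
    w.count 0 = ℓ ∧ w.count (-1) = m}

/-- `barBridgeCount ℓ m` is the number of Motzkin bridges whose first step is `0` or `−1`,
with exactly `ℓ` steps `0` and `m` steps `−1`. -/
noncomputable def barBridgeCount (ℓ m : ℕ) : ℕ :=
  Nat.card {w : List ℤ // IsMotzkinWalk w ∧ w.sum = 0 ∧
    (w.head? = some 0 ∨ w.head? = some (-1)) ∧ w.count 0 = ℓ ∧ w.count (-1) = m}

/-!
Cut a walk from `0` to `+1` just before its last step that leaves level `0`. Since no step
rises by more than one, such a step exists and is a `+1`; the part before it is a bridge, and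
the part after it never goes below its starting level, so it is an excursion. Conversely a
bridge, an up-step and an excursion glue to a walk from `0` to `+1`, and this glued walk has
no other such factorisation: the prefix before a later up-step would end at level at least `1`.
The numbers of `0` and `−1` steps add up along the factorisation, so counting by these two
statistics turns the bijection into a convolution.
-/

open Finset.HasAntidiagonal

theorem Nat.card_subtype_and_eq_card_fiber {α β : Type*} {P Q : α → Prop} {f : α → β} {b : β}
    (h : ∀ x, Q x ↔ P x ∧ f x = b) :
    Nat.card (Subtype Q) = Nat.card {x : Subtype P // f x = b} :=
  Nat.card_congr
    ((Equiv.subtypeEquivRight h).trans (Equiv.subtypeSubtypeEquivSubtypeInter _ _).symm)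

section FiberCount

variable {α β γ M N : Type*} [AddMonoid M] [Finset.HasAntidiagonal M] [AddMonoid N]
  [Finset.HasAntidiagonal N] {f : α → M × N} {g : β → M × N}

def fiberAddEquivSigma (ℓ : M) (m : N) :
    {x : α × β // f x.1 + g x.2 = (ℓ, m)} ≃
      Σ i : ↥(antidiagonal ℓ ×ˢ antidiagonal m),
        {a // f a = (i.1.1.1, i.1.2.1)} × {b // g b = (i.1.1.2, i.1.2.2)} where
  toFun x := ⟨⟨(((f x.1.1).1, (g x.1.2).1), ((f x.1.1).2, (g x.1.2).2)), by
      simpa [Prod.ext_iff] using x.2⟩, ⟨x.1.1, rfl⟩, ⟨x.1.2, rfl⟩⟩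
  invFun y := ⟨(y.2.1.1, y.2.2.1), by
      obtain ⟨⟨⟨p, q⟩, hpq⟩, ⟨a, ha⟩, ⟨b, hb⟩⟩ := y
      simp only [Finset.mem_product, mem_antidiagonal] at hpq
      simp [ha, hb, hpq.1, hpq.2]⟩
  left_inv _ := rfl
  right_inv := by
    rintro ⟨⟨⟨⟨p₁, p₂⟩, q₁, q₂⟩, hpq⟩, ⟨a, ha⟩, ⟨b, hb⟩⟩
    dsimp only at ha hb
    simp only [Prod.ext_iff] at ha hb
    obtain ⟨rfl, rfl⟩ := ha
    obtain ⟨rfl, rfl⟩ := hb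
    rfl

theorem Nat.card_fiber_eq_sum_antidiagonal (e : α × β ≃ γ) {h : γ → M × N}
    (he : ∀ x, h (e x) = f x.1 + g x.2) [∀ k, Finite {a // f a = k}]
    [∀ k, Finite {b // g b = k}] (ℓ : M) (m : N) :
    Nat.card {c // h c = (ℓ, m)} = ∑ p ∈ antidiagonal ℓ, ∑ q ∈ antidiagonal m,
      Nat.card {a // f a = (p.1, q.1)} * Nat.card {b // g b = (p.2, q.2)} := by
  rw [← Finset.sum_product', ← Finset.sum_coe_sort, Nat.card_congr
    ((e.subtypeEquiv fun x => by rw [he]).symm.trans (fiberAddEquivSigma ℓ m)), Nat.card_sigma]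
  simp only [Nat.card_prod]

end FiberCount

def stepCounts (w : List ℤ) : ℕ × ℕ := (w.count 0, w.count (-1))

@[simp]
theorem stepCounts_append (a b : List ℤ) : stepCounts (a ++ b) = stepCounts a + stepCounts b := by
  simp [stepCounts, List.count_append]

@[simp]
theorem stepCounts_one_cons (c : List ℤ) : stepCounts (1 :: c) = stepCounts c := by
  simp [stepCounts]

namespace IsMotzkinWalk

variable {w : List ℤ}

theorem le_one (hw : IsMotzkinWalk w) : ∀ x ∈ w, x ≤ 1 := fun x hx => by
  rcases hw x hx with rfl | rfl | rfl <;> norm_num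

theorem length_eq (hw : IsMotzkinWalk w) :
    (w.length : ℤ) = w.sum + 2 * (stepCounts w).2 + (stepCounts w).1 := by
  induction w with
  | nil => simp [stepCounts]
  | cons x t ih =>
    rw [IsMotzkinWalk, List.forall_mem_cons] at hw
    have := ih hw.2
    simp only [stepCounts] at this ⊢
    rcases hw.1 with rfl | rfl | rfl <;> simp <;> omega

theorem finite_length_eq (n : ℕ) : {w : List ℤ | IsMotzkinWalk w ∧ w.length = n}.Finite := by
  refine ((List.finite_length_eq (Set.Icc (-1 : ℤ) 1) n).image (List.map Subtype.val)).subset ?_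
  rintro w ⟨hw, rfl⟩
  lift w to List (Set.Icc (-1 : ℤ) 1) using fun x hx => by
    rcases hw x hx with rfl | rfl | rfl <;> norm_num
  exact ⟨w, by simp, rfl⟩

end IsMotzkinWalk

theorem finite_stepCounts_fiber {P : List ℤ → Prop} {s : ℤ}
    (hP : ∀ w, P w → IsMotzkinWalk w ∧ w.sum = s) (k : ℕ × ℕ) :
    Finite {w : Subtype P // stepCounts w.1 = k} := by
  have := (IsMotzkinWalk.finite_length_eq (s + 2 * k.2 + k.1).toNat).to_subtype
  refine Finite.of_injective (fun w => (⟨w.1.1, (hP _ w.1.2).1, ?_⟩ :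
    {w : List ℤ | IsMotzkinWalk w ∧ w.length = (s + 2 * k.2 + k.1).toNat})) ?_
  · have := (hP _ w.1.2).1.length_eq
    rw [w.2, (hP _ w.1.2).2] at this
    omega
  · exact fun x y hxy => Subtype.ext (Subtype.ext (congrArg Subtype.val hxy :))

theorem List.exists_eq_append_one_cons_of_le_one {w : List ℤ} (hw : ∀ x ∈ w, x ≤ 1)
    (h : 1 ≤ w.sum) :
    ∃ a c, w = a ++ 1 :: c ∧ a.sum = 0 ∧ ∀ p, p <+: c → 0 ≤ p.sum := by
  induction w using List.reverseRecOn with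
  | nil => simp at h
  | append_singleton t x ih =>
    have hx : x ≤ 1 := hw x (by simp)
    rw [List.sum_append, List.sum_singleton] at h
    obtain ht | ht : t.sum = 0 ∨ 1 ≤ t.sum := by omega
    · obtain rfl : x = 1 := by omega
      exact ⟨t, [], rfl, ht, by simp [List.prefix_nil]⟩
    · obtain ⟨a, c, rfl, ha, hc⟩ := ih (fun y hy => hw y (by simp [hy])) ht
      refine ⟨a, c ++ [x], by simp, ha, fun p hp => ?_⟩
      rcases List.prefix_concat_iff.mp hp with rfl | hp
      · simp only [List.sum_append, List.sum_cons, List.sum_nil] at h ht ⊢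
        omega
      · exact hc p hp

theorem List.eq_nil_of_one_cons_eq_append {a c c' e : List ℤ} (ha : a.sum = 0)
    (hae : (a ++ e).sum = 0) (hc : ∀ p, p <+: c → 0 ≤ p.sum) (h : 1 :: c = e ++ 1 :: c') :
    e = [] := by
  obtain _ | ⟨y, d⟩ := e
  · rfl
  · obtain ⟨rfl, rfl⟩ := List.cons_eq_cons.mp h
    have := hc d (List.prefix_append _ _)
    simp only [List.sum_append, List.sum_cons] at hae
    omega

theorem List.append_one_cons_inj {a c a' c' : List ℤ} (h : a ++ 1 :: c = a' ++ 1 :: c')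
    (ha : a.sum = 0) (ha' : a'.sum = 0) (hc : ∀ p, p <+: c → 0 ≤ p.sum)
    (hc' : ∀ p, p <+: c' → 0 ≤ p.sum) : a = a' ∧ c = c' := by
  rcases List.append_eq_append_iff.mp h with ⟨e, rfl, he⟩ | ⟨e, rfl, he⟩
  · obtain rfl := List.eq_nil_of_one_cons_eq_append ha ha' hc he
    simpa using he
  · obtain rfl := List.eq_nil_of_one_cons_eq_append ha' ha hc' he
    simpa using he.symm

abbrev MotzkinBridge := {w : List ℤ // IsMotzkinWalk w ∧ w.sum = 0}

abbrev MotzkinExcursion :=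
  {w : List ℤ // IsMotzkinWalk w ∧ w.sum = 0 ∧ ∀ p, p <+: w → 0 ≤ p.sum}

abbrev MotzkinPathPlus := {w : List ℤ // IsMotzkinWalk w ∧ w.sum = 1}

instance (k : ℕ × ℕ) : Finite {a : MotzkinBridge // stepCounts a.1 = k} :=
  finite_stepCounts_fiber (fun _ h => h) k

instance (k : ℕ × ℕ) : Finite {c : MotzkinExcursion // stepCounts c.1 = k} :=
  finite_stepCounts_fiber (fun _ h => ⟨h.1, h.2.1⟩) k

def joinByUpStep (x : MotzkinExcursion × MotzkinBridge) : MotzkinPathPlus :=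
  ⟨x.2.1 ++ 1 :: x.1.1, by
    simp only [IsMotzkinWalk, List.forall_mem_append, List.forall_mem_cons]
    exact ⟨x.2.2.1, by norm_num, x.1.2.1⟩, by simp [x.1.2.2.1, x.2.2.2]⟩

theorem stepCounts_joinByUpStep (x : MotzkinExcursion × MotzkinBridge) :
    stepCounts (joinByUpStep x).1 = stepCounts x.1.1 + stepCounts x.2.1 := by
  simp [joinByUpStep, add_comm]

theorem joinByUpStep_bijective : Function.Bijective joinByUpStep := by
  constructor
  · rintro ⟨⟨c, _, _, hc⟩, ⟨a, _, ha⟩⟩ ⟨⟨c', _, _, hc'⟩, ⟨a', _, ha'⟩⟩ h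
    obtain ⟨rfl, rfl⟩ := List.append_one_cons_inj (congrArg Subtype.val h) ha ha' hc hc'
    rfl
  · rintro ⟨w, hw, hsum⟩
    obtain ⟨a, c, rfl, ha, hc⟩ :=
      List.exists_eq_append_one_cons_of_le_one hw.le_one hsum.ge
    simp only [IsMotzkinWalk, List.forall_mem_append, List.forall_mem_cons] at hw
    simp only [List.sum_append, List.sum_cons, ha] at hsum
    exact ⟨(⟨c, hw.2.2, by omega, hc⟩, ⟨a, hw.1, ha⟩), rfl⟩

theorem pathPlusCount_eq_card_fiber (ℓ m : ℕ) :
    pathPlusCount ℓ m = Nat.card {w : MotzkinPathPlus // stepCounts w.1 = (ℓ, m)} :=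
  Nat.card_subtype_and_eq_card_fiber fun _ => by simp [stepCounts, and_assoc]

theorem bridgeCount_eq_card_fiber (ℓ m : ℕ) :
    bridgeCount ℓ m = Nat.card {w : MotzkinBridge // stepCounts w.1 = (ℓ, m)} :=
  Nat.card_subtype_and_eq_card_fiber fun _ => by simp [stepCounts, and_assoc]

theorem excursionCount_eq_card_fiber (ℓ m : ℕ) :
    excursionCount ℓ m = Nat.card {w : MotzkinExcursion // stepCounts w.1 = (ℓ, m)} :=
  Nat.card_subtype_and_eq_card_fiber fun _ => by simp [stepCounts, and_assoc]

/-- **Decomposition of Motzkin paths from `0` to `+1`:**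
`B⁽⁺¹⁾_{ℓ,m} = Σ_{ℓ₁+ℓ₂=ℓ, m₁+m₂=m} E_{ℓ₁,m₁}·B_{ℓ₂,m₂}`, i.e. `B⁽⁺¹⁾ = E·B` as formal
power series. -/
theorem pathPlus_decomposition (ℓ m : ℕ) :
    pathPlusCount ℓ m =
      ∑ p ∈ Finset.HasAntidiagonal.antidiagonal ℓ, ∑ q ∈ Finset.HasAntidiagonal.antidiagonal m,
        excursionCount p.1 q.1 * bridgeCount p.2 q.2 := by
  rw [pathPlusCount_eq_card_fiber, Nat.card_fiber_eq_sum_antidiagonal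
    (Equiv.ofBijective _ joinByUpStep_bijective) (f := fun c => stepCounts c.1)
    (g := fun a => stepCounts a.1) stepCounts_joinByUpStep]
  simp only [excursionCount_eq_card_fiber, bridgeCount_eq_card_fiber]
end

section
/- Let D be a set of even positive integers with D ⊄ {2}, and define H(x) = Σ_{2i∈D} (i−1)·C(2i−1, i)·x^i for x ≥ 0 within the radius of convergence of this series. Then the equation H(R₀) = 1 has a unique solution R₀ > 0 lying strictly inside the interval of convergence; in particular if D is infinite then 0 < R₀ < 1/4. Moreover, setting ρ = 1/(Σ_{2i∈D} i·C(2i−1, i)·R₀^{i−1}), the pair (ρ, R₀) is a positive solution of the characteristic system R₀ = ρ + ρ·Σ_{2i∈D} C(2i−1,i)·R₀^i and 1 = ρ·Σ_{2i∈D} i·C(2i−1,i)·R₀^{i−1}, with both series convergent. -/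
/-- Summand of `H(x) = Σ_{2i∈D} (i−1)·C(2i−1,i)·x^i`. -/
noncomputable def Hterm (D : Set ℕ) (x : ℝ) (i : ℕ) : ℝ :=
  Set.indicator {j : ℕ | 2 * j ∈ D} (fun j => ((j : ℝ) - 1) * ((2 * j - 1).choose j : ℝ) * x ^ j) i

/-- Summand of `Σ_{2i∈D} C(2i−1,i)·x^i`. -/
noncomputable def Fterm (D : Set ℕ) (x : ℝ) (i : ℕ) : ℝ :=
  Set.indicator {j : ℕ | 2 * j ∈ D} (fun j => ((2 * j - 1).choose j : ℝ) * x ^ j) i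

/-- Summand of `Σ_{2i∈D} i·C(2i−1,i)·x^{i−1}`. -/
noncomputable def Fterm' (D : Set ℕ) (x : ℝ) (i : ℕ) : ℝ :=
  Set.indicator {j : ℕ | 2 * j ∈ D} (fun j => (j : ℝ) * ((2 * j - 1).choose j : ℝ) * x ^ (j - 1)) i

section charAux
variable {D : Set ℕ}

lemma two_mul_choose_eq {j : ℕ} (hj : 1 ≤ j) :
    2 * (2 * j - 1).choose j = Nat.centralBinom j := by
  obtain ⟨k, rfl⟩ : ∃ k, j = k + 1 := ⟨j - 1, by omega⟩
  have h1 : 2 * (k + 1) - 1 = 2 * k + 1 := by omega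
  have h2 : (2 * k + 1).choose k = (2 * k + 1).choose (k + 1) := by
    have := Nat.choose_symm (n := 2 * k + 1) (k := k + 1) (by omega)
    simpa [show 2 * k + 1 - (k + 1) = k by omega] using this
  rw [h1, Nat.centralBinom, show 2 * (k + 1) = (2 * k + 1) + 1 by ring]
  conv_rhs => rw [Nat.choose_succ_succ]
  rw [h2]; ring

lemma choose_upper (j : ℕ) : ((2 * j - 1).choose j : ℝ) ≤ 4 ^ j := by
  have h : (2 * j - 1).choose j ≤ 4 ^ j := by
    cases j with
    | zero => simp
    | succ k =>
      have h1 : 2 * (k + 1) - 1 = 2 * k + 1 := by omega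
      rw [h1]
      have h2 : (2 * k + 1).choose (k + 1) = (2 * k + 1).choose k := by
        have := Nat.choose_symm (n := 2 * k + 1) (k := k + 1) (by omega)
        simpa [show 2 * k + 1 - (k + 1) = k by omega] using this.symm
      calc (2 * k + 1).choose (k + 1) = (2 * k + 1).choose k := h2
        _ ≤ 4 ^ k := Nat.choose_middle_le_pow k
        _ ≤ 4 ^ (k + 1) := Nat.pow_le_pow_right (by norm_num) (by omega)
  exact_mod_cast h

lemma choose_lower {j : ℕ} (hj : 1 ≤ j) :
    (4 : ℝ) ^ j ≤ 4 * j * ((2 * j - 1).choose j : ℝ) := by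
  have h : 4 ^ j ≤ 4 * j * (2 * j - 1).choose j := by
    calc 4 ^ j ≤ 2 * j * Nat.centralBinom j :=
          Nat.four_pow_le_two_mul_self_mul_centralBinom j hj
      _ = 2 * j * (2 * (2 * j - 1).choose j) := by rw [two_mul_choose_eq hj]
      _ = 4 * j * (2 * j - 1).choose j := by ring
  exact_mod_cast h

lemma mem_one_le (hmem : ∀ k ∈ D, Even k ∧ 0 < k) {j : ℕ} (hj : 2 * j ∈ D) : 1 ≤ j := by
  have := (hmem _ hj).2; omega

lemma Hterm_nonneg (hmem : ∀ k ∈ D, Even k ∧ 0 < k) {x : ℝ} (hx : 0 ≤ x) (j : ℕ) :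
    0 ≤ Hterm D x j := by
  by_cases h : j ∈ {j : ℕ | 2 * j ∈ D}
  · rw [Hterm, Set.indicator_of_mem h]
    have hj : (1 : ℝ) ≤ j := by exact_mod_cast mem_one_le hmem h
    have : (0:ℝ) ≤ ((j : ℝ) - 1) := by linarith
    positivity
  · rw [Hterm, Set.indicator_of_notMem h]

lemma Hterm_mono (hmem : ∀ k ∈ D, Even k ∧ 0 < k) {x y : ℝ} (hx : 0 ≤ x) (hxy : x ≤ y)
    (j : ℕ) : Hterm D x j ≤ Hterm D y j := by
  by_cases h : j ∈ {j : ℕ | 2 * j ∈ D}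
  · simp only [Hterm, Set.indicator_of_mem h]
    have hj : (1 : ℝ) ≤ j := by exact_mod_cast mem_one_le hmem h
    have h1 : (0:ℝ) ≤ ((j : ℝ) - 1) * ((2 * j - 1).choose j : ℝ) :=
      mul_nonneg (by linarith) (by positivity)
    exact mul_le_mul_of_nonneg_left (pow_le_pow_left₀ hx hxy j) h1
  · simp only [Hterm, Set.indicator_of_notMem h]; exact le_rfl

lemma Hterm_summable (hmem : ∀ k ∈ D, Even k ∧ 0 < k) {x : ℝ} (hx : 0 ≤ x)
    (h4 : x < 1 / 4) : Summable (Hterm D x) := by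
  have hq0 : 0 ≤ 4 * x := by linarith
  have hq1 : ‖4 * x‖ < 1 := by rw [Real.norm_eq_abs, abs_of_nonneg hq0]; linarith
  have hgeo : Summable (fun j : ℕ => (j : ℝ) * (4 * x) ^ j) := by
    simpa using summable_pow_mul_geometric_of_norm_lt_one 1 hq1
  refine Summable.of_nonneg_of_le (Hterm_nonneg hmem hx) (fun j => ?_) hgeo
  by_cases h : j ∈ {j : ℕ | 2 * j ∈ D}
  · rw [Hterm, Set.indicator_of_mem h]
    have h1 : ((j : ℝ) - 1) ≤ (j : ℝ) := by linarith
    have h2 := choose_upper j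
    have hxj : (0:ℝ) ≤ x ^ j := by positivity
    have hj : (1 : ℝ) ≤ j := by exact_mod_cast mem_one_le hmem h
    calc ((j : ℝ) - 1) * ((2 * j - 1).choose j : ℝ) * x ^ j
        ≤ (j : ℝ) * (4 : ℝ) ^ j * x ^ j := by
          apply mul_le_mul_of_nonneg_right _ hxj
          apply mul_le_mul h1 h2 (by positivity) (by linarith)
      _ = (j : ℝ) * (4 * x) ^ j := by rw [mul_pow]; ring
  · rw [Hterm, Set.indicator_of_notMem h]; positivity

lemma Hterm_summable_of_le (hmem : ∀ k ∈ D, Even k ∧ 0 < k) {x y : ℝ} (hx : 0 ≤ x)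
    (hxy : x ≤ y) (hy : Summable (Hterm D y)) : Summable (Hterm D x) :=
  Summable.of_nonneg_of_le (Hterm_nonneg hmem hx) (Hterm_mono hmem hx hxy) hy

lemma Hterm_continuous (D : Set ℕ) (j : ℕ) : Continuous (fun x : ℝ => Hterm D x j) := by
  by_cases h : j ∈ {j : ℕ | 2 * j ∈ D}
  · simp only [Hterm, Set.indicator_of_mem h]; fun_prop
  · simp only [Hterm, Set.indicator_of_notMem h]; exact continuous_const

lemma Htsum_zero (hmem : ∀ k ∈ D, Even k ∧ 0 < k) : (∑' j : ℕ, Hterm D 0 j) = 0 := by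
  have h : ∀ j : ℕ, Hterm D 0 j = 0 := by
    intro j
    by_cases h : j ∈ {j : ℕ | 2 * j ∈ D}
    · rw [Hterm, Set.indicator_of_mem h]
      have hj : 1 ≤ j := mem_one_le hmem h
      rw [zero_pow (by omega)]; ring
    · rw [Hterm, Set.indicator_of_notMem h]
  rw [tsum_congr h, tsum_zero]

lemma exists_j0 (hmem : ∀ k ∈ D, Even k ∧ 0 < k) (hD : ¬ D ⊆ {2}) :
    ∃ j₀ : ℕ, 2 * j₀ ∈ D ∧ 2 ≤ j₀ := by
  obtain ⟨k, hk, hk2⟩ := Set.not_subset.mp hD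
  obtain ⟨⟨m, hm⟩, hkpos⟩ := hmem k hk
  refine ⟨m, by rw [show 2 * m = k by omega]; exact hk, by
    simp only [Set.mem_singleton_iff] at hk2; omega⟩

lemma Htsum_lt (hmem : ∀ k ∈ D, Even k ∧ 0 < k) (hD : ¬ D ⊆ {2}) {x y : ℝ}
    (hx : 0 ≤ x) (hxy : x < y) (hy : Summable (Hterm D y)) :
    (∑' j : ℕ, Hterm D x j) < ∑' j : ℕ, Hterm D y j := by
  obtain ⟨j₀, hj₀D, hj₀2⟩ := exists_j0 hmem hD
  have hmemj : j₀ ∈ {j : ℕ | 2 * j ∈ D} := hj₀D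
  refine Summable.tsum_lt_tsum (Hterm_mono hmem hx hxy.le) (i := j₀) ?_
    (Hterm_summable_of_le hmem hx hxy.le hy) hy
  simp only [Hterm, Set.indicator_of_mem hmemj]
  have hj : (2 : ℝ) ≤ j₀ := by exact_mod_cast hj₀2
  have hC : (0:ℝ) < ((2 * j₀ - 1).choose j₀ : ℝ) := by
    exact_mod_cast Nat.choose_pos (by omega)
  have hcoef : (0:ℝ) < ((j₀ : ℝ) - 1) * ((2 * j₀ - 1).choose j₀ : ℝ) := by
    apply mul_pos (by linarith) hC
  exact mul_lt_mul_of_pos_left (pow_lt_pow_left₀ hxy hx (by omega)) hcoef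


lemma Htsum_continuousOn (hmem : ∀ k ∈ D, Even k ∧ 0 < k) {b : ℝ}
    (hsum : Summable (Hterm D b)) :
    ContinuousOn (fun x : ℝ => ∑' j : ℕ, Hterm D x j) (Set.Icc 0 b) :=
  continuousOn_tsum (fun j => (Hterm_continuous D j).continuousOn) hsum
    (fun j x hx => by
      rw [Real.norm_eq_abs, abs_of_nonneg (Hterm_nonneg hmem hx.1 j)]
      exact Hterm_mono hmem hx.1 hx.2 j)

lemma exists_b (hmem : ∀ k ∈ D, Even k ∧ 0 < k) (hD : ¬ D ⊆ {2}) :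
    ∃ b b' : ℝ, 0 < b ∧ b < b' ∧ Summable (Hterm D b') ∧
      1 ≤ (∑' j : ℕ, Hterm D b j) ∧ ({j : ℕ | 2 * j ∈ D}.Finite ∨ b' < 1 / 4) := by
  obtain ⟨j₀, hj₀D, hj₀2⟩ := exists_j0 hmem hD
  have hmemj : j₀ ∈ {j : ℕ | 2 * j ∈ D} := hj₀D
  by_cases hfin : {j : ℕ | 2 * j ∈ D}.Finite
  · have hsum : ∀ x : ℝ, Summable (Hterm D x) := by
      intro x
      apply summable_of_ne_finset_zero (s := hfin.toFinset)
      intro j hj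
      rw [Set.Finite.mem_toFinset] at hj
      rw [Hterm, Set.indicator_of_notMem hj]
    refine ⟨1, 2, one_pos, one_lt_two, hsum 2, ?_, Or.inl hfin⟩
    have hle := Summable.le_tsum (hsum 1) j₀ (fun b' _ => Hterm_nonneg hmem zero_le_one b')
    refine le_trans ?_ hle
    rw [Hterm, Set.indicator_of_mem hmemj]
    have hj : (2 : ℝ) ≤ j₀ := by exact_mod_cast hj₀2
    have hC : (1:ℝ) ≤ ((2 * j₀ - 1).choose j₀ : ℝ) := by
      exact_mod_cast Nat.choose_pos (show j₀ ≤ 2 * j₀ - 1 by omega)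
    rw [one_pow]
    nlinarith
  · have hSinf : {j : ℕ | 2 * j ∈ D}.Infinite := hfin
    obtain ⟨F, hFsub, hFcard⟩ :=
      ((hSinf.diff (Set.finite_Iio 2)).exists_subset_card_eq 9)
    set g : ℝ → ℝ := fun x => ∑ j ∈ F, Hterm D x j with hg
    have hgcont : Continuous g := continuous_finset_sum _ (fun j _ => Hterm_continuous D j)
    have hg14 : (9:ℝ) / 8 ≤ g (1/4) := by
      have hterm : ∀ j ∈ F, (1:ℝ)/8 ≤ Hterm D (1/4) j := by
        intro j hj
        obtain ⟨hjS, hjge⟩ := hFsub hj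
        simp only [Set.mem_Iio, not_lt] at hjge
        rw [Hterm, Set.indicator_of_mem hjS]
        have hj2 : (2 : ℝ) ≤ j := by exact_mod_cast hjge
        have hC := choose_lower (show 1 ≤ j by omega)
        have ht : (0:ℝ) < ((1:ℝ)/4) ^ j := by positivity
        have hqt : (4:ℝ) ^ j * ((1:ℝ)/4) ^ j = 1 := by
          rw [← mul_pow]; norm_num
        have hCt : (0:ℝ) ≤ ((2 * j - 1).choose j : ℝ) := by positivity
        nlinarith [mul_le_mul_of_nonneg_right hC ht.le,
          mul_nonneg hCt ht.le]
      calc (9:ℝ)/8 = F.card * ((1:ℝ)/8) := by rw [hFcard]; norm_num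
        _ = ∑ _j ∈ F, ((1:ℝ)/8) := by rw [Finset.sum_const, nsmul_eq_mul]
        _ ≤ g (1/4) := Finset.sum_le_sum hterm
    have h1 : ∀ᶠ x in nhdsWithin (1/4 : ℝ) (Set.Iio (1/4)), 1 < g x := by
      have ht : Filter.Tendsto g (nhdsWithin (1/4 : ℝ) (Set.Iio (1/4))) (nhds (g (1/4))) :=
        (hgcont.tendsto _).mono_left nhdsWithin_le_nhds
      exact ht.eventually (eventually_gt_nhds (by linarith))
    have h2 : ∀ᶠ x in nhdsWithin (1/4 : ℝ) (Set.Iio (1/4)), x ∈ Set.Ioo (1/8 : ℝ) (1/4) := by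
      filter_upwards [Ioo_mem_nhdsLT_of_mem (show (1/4:ℝ) ∈ Set.Ioc (1/8) (1/4) by norm_num)]
        with x hx using hx
    obtain ⟨b, hb1, hbIoo⟩ := (h1.and h2).exists
    have hb0 : (0:ℝ) < b := lt_trans (by norm_num) hbIoo.1
    refine ⟨b, (b + 1/4)/2, hb0, by linarith [hbIoo.2], ?_, ?_, Or.inr (by linarith [hbIoo.2])⟩
    · exact Hterm_summable hmem (by linarith) (by linarith [hbIoo.2])
    · have hsumb : Summable (Hterm D b) :=
        Hterm_summable hmem hb0.le hbIoo.2
      have := Summable.sum_le_tsum F (fun j _ => Hterm_nonneg hmem hb0.le j) hsumb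
      calc (1:ℝ) ≤ g b := hb1.le
        _ ≤ ∑' j : ℕ, Hterm D b j := this

end charAux

/-- **The characteristic system for bipartite maps.**
Let `D` be a set of even positive integers with `D ⊄ {2}`.  Then the equation `H(R₀) = 1`
has a unique positive solution `R₀` lying strictly inside the interval of convergence of
`H`; if `D` is infinite then moreover `R₀ < 1/4`.  Setting
`ρ = 1/(Σ_{2i∈D} i·C(2i−1,i)·R₀^{i−1})`, the pair `(ρ, R₀)` is a positive solution of the
characteristic system `R₀ = ρ + ρ·Σ_{2i∈D} C(2i−1,i)·R₀^i` and
`1 = ρ·Σ_{2i∈D} i·C(2i−1,i)·R₀^{i−1}`, all series being convergent. -/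
theorem characteristic_system (D : Set ℕ) (hmem : ∀ k ∈ D, Even k ∧ 0 < k)
    (hD : ¬ D ⊆ {2}) :
    ∃ R₀ : ℝ, 0 < R₀ ∧ Summable (Hterm D R₀) ∧ (∃ x : ℝ, R₀ < x ∧ Summable (Hterm D x)) ∧
      (∑' i : ℕ, Hterm D R₀ i) = 1 ∧
      (∀ R₁ : ℝ, 0 < R₁ → Summable (Hterm D R₁) → (∑' i : ℕ, Hterm D R₁ i) = 1 → R₁ = R₀) ∧
      (D.Infinite → R₀ < 1 / 4) ∧
      Summable (Fterm D R₀) ∧ Summable (Fterm' D R₀) ∧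
      (0 < (1 : ℝ) / (∑' i : ℕ, Fterm' D R₀ i)) ∧
      (R₀ = (1 : ℝ) / (∑' i : ℕ, Fterm' D R₀ i) +
        (1 : ℝ) / (∑' i : ℕ, Fterm' D R₀ i) * ∑' i : ℕ, Fterm D R₀ i) ∧
      (1 : ℝ) = (1 : ℝ) / (∑' i : ℕ, Fterm' D R₀ i) * ∑' i : ℕ, Fterm' D R₀ i := by
  obtain ⟨j₀, hj₀D, hj₀2⟩ := exists_j0 hmem hD
  have hmemj : j₀ ∈ {j : ℕ | 2 * j ∈ D} := hj₀D
  obtain ⟨b, b', hb0, hbb', hsumb', hHb1, hdisj⟩ := exists_b hmem hD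
  have hsumb : Summable (Hterm D b) := Hterm_summable_of_le hmem hb0.le hbb'.le hsumb'
  have hcont := Htsum_continuousOn hmem hsumb
  have hone : (1:ℝ) ∈ Set.Icc (∑' j : ℕ, Hterm D 0 j) (∑' j : ℕ, Hterm D b j) := by
    rw [Htsum_zero hmem]; exact ⟨zero_le_one, hHb1⟩
  obtain ⟨R₀, hR₀mem, hHR₀⟩ := intermediate_value_Icc hb0.le hcont hone
  have hHR₀' : (∑' j : ℕ, Hterm D R₀ j) = 1 := hHR₀
  have hR₀b : R₀ ≤ b := hR₀mem.2
  have hR₀pos : 0 < R₀ := by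
    rcases hR₀mem.1.lt_or_eq with h | h
    · exact h
    · exfalso; rw [← h, Htsum_zero hmem] at hHR₀'; norm_num at hHR₀'
  have hsumR₀ : Summable (Hterm D R₀) := Hterm_summable_of_le hmem hR₀pos.le hR₀b hsumb
  have hFnonneg : ∀ j, 0 ≤ Fterm D R₀ j := by
    intro j
    by_cases h : j ∈ {j : ℕ | 2 * j ∈ D}
    · rw [Fterm, Set.indicator_of_mem h]; positivity
    · rw [Fterm, Set.indicator_of_notMem h]
  have hF'nonneg : ∀ j, 0 ≤ Fterm' D R₀ j := by
    intro j
    by_cases h : j ∈ {j : ℕ | 2 * j ∈ D}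
    · rw [Fterm', Set.indicator_of_mem h]; positivity
    · rw [Fterm', Set.indicator_of_notMem h]
  -- summability of the two auxiliary series
  have hFsum : Summable (Fterm D R₀) := by
    rcases hdisj with hfin | hlt
    · apply summable_of_ne_finset_zero (s := hfin.toFinset)
      intro j hj
      rw [Set.Finite.mem_toFinset] at hj
      rw [Fterm, Set.indicator_of_notMem hj]
    · have hR4 : R₀ < 1/4 := by linarith
      have hq0 : (0:ℝ) ≤ 4 * R₀ := by linarith
      have hq1 : 4 * R₀ < 1 := by linarith
      refine Summable.of_nonneg_of_le hFnonneg (fun j => ?_)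
        (summable_geometric_of_lt_one hq0 hq1)
      by_cases h : j ∈ {j : ℕ | 2 * j ∈ D}
      · rw [Fterm, Set.indicator_of_mem h, mul_pow]
        exact mul_le_mul_of_nonneg_right (choose_upper j) (by positivity)
      · rw [Fterm, Set.indicator_of_notMem h]; positivity
  have hF'sum : Summable (Fterm' D R₀) := by
    rcases hdisj with hfin | hlt
    · apply summable_of_ne_finset_zero (s := hfin.toFinset)
      intro j hj
      rw [Set.Finite.mem_toFinset] at hj
      rw [Fterm', Set.indicator_of_notMem hj]
    · have hR4 : R₀ < 1/4 := by linarith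
      have hq0 : (0:ℝ) ≤ 4 * R₀ := by linarith
      have hq1 : ‖4 * R₀‖ < 1 := by
        rw [Real.norm_eq_abs, abs_of_nonneg hq0]; linarith
      have hgeo : Summable (fun j : ℕ => (j : ℝ) * (4 * R₀) ^ j) := by
        simpa using summable_pow_mul_geometric_of_norm_lt_one 1 hq1
      refine Summable.of_nonneg_of_le hF'nonneg (fun j => ?_) (hgeo.mul_left (1/R₀))
      by_cases h : j ∈ {j : ℕ | 2 * j ∈ D}
      · have hj1 : 1 ≤ j := mem_one_le hmem h
        obtain ⟨k, rfl⟩ : ∃ k, j = k + 1 := ⟨j - 1, by omega⟩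
        rw [Fterm', Set.indicator_of_mem h]
        have heq : 1/R₀ * ((((k:ℕ)+1 : ℕ) : ℝ) * (4 * R₀) ^ (k+1))
            = (((k:ℕ)+1 : ℕ) : ℝ) * 4 ^ (k+1) * R₀ ^ k := by
          rw [mul_pow]
          field_simp
          ring
        rw [heq, show (k + 1) - 1 = k from rfl]
        have := choose_upper (k+1)
        have hcast : ((k:ℕ)+1 : ℝ) = (((k:ℕ)+1 : ℕ) : ℝ) := by push_cast; ring
        apply mul_le_mul_of_nonneg_right _ (by positivity : (0:ℝ) ≤ R₀ ^ k)
        apply mul_le_mul_of_nonneg_left this (by positivity)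
      · rw [Fterm', Set.indicator_of_notMem h]; positivity
  -- positivity of T'
  have hT'pos : 0 < ∑' i : ℕ, Fterm' D R₀ i := by
    have hterm : 0 < Fterm' D R₀ j₀ := by
      rw [Fterm', Set.indicator_of_mem hmemj]
      have hj : (2 : ℝ) ≤ (j₀ : ℝ) := by exact_mod_cast hj₀2
      have hC : (0:ℝ) < ((2 * j₀ - 1).choose j₀ : ℝ) := by
        exact_mod_cast Nat.choose_pos (show j₀ ≤ 2 * j₀ - 1 by omega)
      have h0 : (0:ℝ) < R₀ ^ (j₀ - 1) := by positivity
      exact mul_pos (mul_pos (by linarith) hC) h0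
    exact lt_of_lt_of_le hterm (Summable.le_tsum hF'sum j₀ (fun c _ => hF'nonneg c))
  have hT'ne : (∑' i : ℕ, Fterm' D R₀ i) ≠ 0 := hT'pos.ne'
  -- key identity
  have hpt : ∀ j : ℕ, R₀ * Fterm' D R₀ j = Hterm D R₀ j + Fterm D R₀ j := by
    intro j
    by_cases h : j ∈ {j : ℕ | 2 * j ∈ D}
    · have hj1 : 1 ≤ j := mem_one_le hmem h
      obtain ⟨k, rfl⟩ : ∃ k, j = k + 1 := ⟨j - 1, by omega⟩
      rw [Hterm, Fterm, Fterm', Set.indicator_of_mem h, Set.indicator_of_mem h,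
        Set.indicator_of_mem h, show (k + 1) - 1 = k from rfl, pow_succ]
      push_cast
      ring
    · rw [Hterm, Fterm, Fterm', Set.indicator_of_notMem h, Set.indicator_of_notMem h,
        Set.indicator_of_notMem h]
      ring
  have hkey : R₀ * (∑' i : ℕ, Fterm' D R₀ i)
      = 1 + ∑' i : ℕ, Fterm D R₀ i := by
    calc R₀ * (∑' i : ℕ, Fterm' D R₀ i) = ∑' i : ℕ, R₀ * Fterm' D R₀ i := tsum_mul_left.symm
      _ = ∑' i : ℕ, (Hterm D R₀ i + Fterm D R₀ i) := tsum_congr hpt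
      _ = (∑' i : ℕ, Hterm D R₀ i) + ∑' i : ℕ, Fterm D R₀ i := Summable.tsum_add hsumR₀ hFsum
      _ = 1 + ∑' i : ℕ, Fterm D R₀ i := by rw [hHR₀']
  refine ⟨R₀, hR₀pos, hsumR₀, ⟨b', lt_of_le_of_lt hR₀b hbb', hsumb'⟩, hHR₀', ?_, ?_,
    hFsum, hF'sum, by positivity, ?_, by field_simp⟩
  · intro R₁ h1pos h1sum h1eq
    rcases lt_trichotomy R₁ R₀ with h | h | h
    · exfalso
      have := Htsum_lt hmem hD h1pos.le h hsumR₀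
      rw [h1eq, hHR₀'] at this
      exact lt_irrefl _ this
    · exact h
    · exfalso
      have := Htsum_lt hmem hD hR₀pos.le h h1sum
      rw [h1eq, hHR₀'] at this
      exact lt_irrefl _ this
  · intro hDinf
    rcases hdisj with hfin | hlt
    · exfalso
      apply hDinf
      have hsub : D ⊆ (fun j => 2 * j) '' {j : ℕ | 2 * j ∈ D} := by
        intro k hk
        obtain ⟨⟨m, hm⟩, hpos⟩ := hmem k hk
        have hk' : 2 * m = k := by omega
        exact ⟨m, by rw [Set.mem_setOf_eq, hk']; exact hk, hk'⟩
      exact (hfin.image _).subset hsub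
    · linarith
  · field_simp
    linarith [hkey]
end
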